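/- For every α ∈ ℂ, the Lie-Yamaguti algebra structure 𝓛₁₉^α on ℂ⁴, given by [e₁,e₂]=e₄, [e₁,e₃]=e₄, [e₂,e₃]=e₄, [e₃,e₁,e₂]=e₄, [e₂,e₃,e₁]=α e₄, [e₁,e₂,e₃]=−(1+α)e₄, degenerates to the structure 𝓛₁₆^α with zero binary product and trilinear products [e₂,e₃,e₁]=α e₄, [e₁,e₂,e₃]=−(1+α)e₄, [e₃,e₁,e₂]=e₄. -/
import Mathlib


open Filter Matrix Topology

/-- ℂ⁴ -/
abbrev V4 : Type := Fin 4 → ℂ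

/-- GL₄(ℂ) -/
abbrev GL4 := Matrix.GeneralLinearGroup (Fin 4) ℂ

/-- structure constants of a bilinear map on ℂ⁴: `μ i j` is the value on `(eᵢ, eⱼ)`. -/
abbrev Bil4 := Fin 4 → Fin 4 → V4

/-- structure constants of a trilinear map on ℂ⁴. -/
abbrev Tril4 := Fin 4 → Fin 4 → Fin 4 → V4

/-- standard basis vectors -/
noncomputable def e4 (k : Fin 4) : V4 := Pi.single k (1 : ℂ)

/-- action of `g ∈ GL₄(ℂ)` on a bilinear map: `(g·μ)(x,y) = g μ(g⁻¹x, g⁻¹y)`,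
in structure constants. -/
noncomputable def actBil (g : GL4) (μ : Bil4) : Bil4 := fun i j =>
  (g : Matrix (Fin 4) (Fin 4) ℂ).mulVec
    (∑ p, ∑ q,
      (((g⁻¹ : GL4) : Matrix (Fin 4) (Fin 4) ℂ) p i *
       ((g⁻¹ : GL4) : Matrix (Fin 4) (Fin 4) ℂ) q j) • μ p q)

/-- action of `g ∈ GL₄(ℂ)` on a trilinear map:
`(g·τ)(x,y,z) = g τ(g⁻¹x, g⁻¹y, g⁻¹z)`, in structure constants. -/
noncomputable def actTril (g : GL4) (τ : Tril4) : Tril4 := fun i j k =>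
  (g : Matrix (Fin 4) (Fin 4) ℂ).mulVec
    (∑ p, ∑ q, ∑ r,
      (((g⁻¹ : GL4) : Matrix (Fin 4) (Fin 4) ℂ) p i *
       ((g⁻¹ : GL4) : Matrix (Fin 4) (Fin 4) ℂ) q j *
       ((g⁻¹ : GL4) : Matrix (Fin 4) (Fin 4) ℂ) r k) • τ p q r)

/-- `(μ,τ)` degenerates to `(lam,sig)`: there is a curve `g : ℂ∖{0} → GL₄(ℂ)` with
`g(t)·μ → lam` and `g(t)·τ → sig` as `t → 0`. -/
def Degenerates (μ : Bil4) (τ : Tril4) (lam : Bil4) (sig : Tril4) : Prop :=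
  ∃ g : ℂ → GL4,
    Tendsto (fun t => actBil (g t) μ) (𝓝[≠] (0 : ℂ)) (𝓝 lam) ∧
    Tendsto (fun t => actTril (g t) τ) (𝓝[≠] (0 : ℂ)) (𝓝 sig)

noncomputable def μL19 : Bil4 := fun i j =>
  if i = (0 : Fin 4) ∧ j = (1 : Fin 4) then e4 3
  else if i = (1 : Fin 4) ∧ j = (0 : Fin 4) then -(e4 3)
  else if i = (0 : Fin 4) ∧ j = (2 : Fin 4) then e4 3
  else if i = (2 : Fin 4) ∧ j = (0 : Fin 4) then -(e4 3)
  else if i = (1 : Fin 4) ∧ j = (2 : Fin 4) then e4 3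
  else if i = (2 : Fin 4) ∧ j = (1 : Fin 4) then -(e4 3)
  else 0

noncomputable def τL19 (α : ℂ) : Tril4 := fun i j k =>
  if i = (2 : Fin 4) ∧ j = (0 : Fin 4) ∧ k = (1 : Fin 4) then e4 3
  else if i = (0 : Fin 4) ∧ j = (2 : Fin 4) ∧ k = (1 : Fin 4) then -(e4 3)
  else if i = (1 : Fin 4) ∧ j = (2 : Fin 4) ∧ k = (0 : Fin 4) then α • e4 3
  else if i = (2 : Fin 4) ∧ j = (1 : Fin 4) ∧ k = (0 : Fin 4) then -(α • e4 3)
  else if i = (0 : Fin 4) ∧ j = (1 : Fin 4) ∧ k = (2 : Fin 4) then (-(1 + α)) • e4 3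
  else if i = (1 : Fin 4) ∧ j = (0 : Fin 4) ∧ k = (2 : Fin 4) then -((-(1 + α)) • e4 3)
  else 0

noncomputable def zeroBil : Bil4 := fun _ _ => 0

noncomputable def τL16 (α : ℂ) : Tril4 := fun i j k =>
  if i = (1 : Fin 4) ∧ j = (2 : Fin 4) ∧ k = (0 : Fin 4) then α • e4 3
  else if i = (2 : Fin 4) ∧ j = (1 : Fin 4) ∧ k = (0 : Fin 4) then -(α • e4 3)
  else if i = (0 : Fin 4) ∧ j = (1 : Fin 4) ∧ k = (2 : Fin 4) then (-(1 + α)) • e4 3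
  else if i = (1 : Fin 4) ∧ j = (0 : Fin 4) ∧ k = (2 : Fin 4) then -((-(1 + α)) • e4 3)
  else if i = (2 : Fin 4) ∧ j = (0 : Fin 4) ∧ k = (1 : Fin 4) then e4 3
  else if i = (0 : Fin 4) ∧ j = (2 : Fin 4) ∧ k = (1 : Fin 4) then -(e4 3)
  else 0


noncomputable def dvec (t : ℂ) : Fin 4 → ℂ := ![t, t, t, t ^ 3]

lemma dvec_ne {t : ℂ} (ht : t ≠ 0) (i : Fin 4) : dvec t i ≠ 0 := by
  fin_cases i <;> simp [dvec, ht]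

noncomputable def gcurve (t : ℂ) : GL4 :=
  if ht : t = 0 then 1 else
  { val := Matrix.diagonal (dvec t)
    inv := Matrix.diagonal (fun i => (dvec t i)⁻¹)
    val_inv := by
      rw [Matrix.diagonal_mul_diagonal]
      have : (fun i => dvec t i * (dvec t i)⁻¹) = fun _ => (1 : ℂ) := by
        funext i; exact mul_inv_cancel₀ (dvec_ne ht i)
      rw [this, Matrix.diagonal_one]
    inv_val := by
      rw [Matrix.diagonal_mul_diagonal]
      have : (fun i => (dvec t i)⁻¹ * dvec t i) = fun _ => (1 : ℂ) := by
        funext i; exact inv_mul_cancel₀ (dvec_ne ht i)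
      rw [this, Matrix.diagonal_one] }

lemma coe_gcurve {t : ℂ} (ht : t ≠ 0) :
    ((gcurve t : GL4) : Matrix (Fin 4) (Fin 4) ℂ) = Matrix.diagonal (dvec t) := by
  simp [gcurve, ht]

lemma coe_gcurve_inv {t : ℂ} (ht : t ≠ 0) :
    (((gcurve t)⁻¹ : GL4) : Matrix (Fin 4) (Fin 4) ℂ)
      = Matrix.diagonal (fun i => (dvec t i)⁻¹) := by
  rw [gcurve, dif_neg ht]
  rfl

lemma actBil_gcurve {t : ℂ} (ht : t ≠ 0) (μ : Bil4) :
    actBil (gcurve t) μ = fun i j k =>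
      dvec t k * ((dvec t i)⁻¹ * (dvec t j)⁻¹ * μ i j k) := by
  funext i j k
  rw [actBil, coe_gcurve ht, coe_gcurve_inv ht]
  have hsum : (∑ p, ∑ q,
      (Matrix.diagonal (fun i => (dvec t i)⁻¹) p i *
       Matrix.diagonal (fun i => (dvec t i)⁻¹) q j) • μ p q)
      = ((dvec t i)⁻¹ * (dvec t j)⁻¹) • μ i j := by
    simp [Matrix.diagonal_apply, ite_mul, mul_ite, ite_smul]
  rw [hsum, Matrix.mulVec_diagonal]
  simp [mul_assoc]

lemma actTril_gcurve {t : ℂ} (ht : t ≠ 0) (τ : Tril4) :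
    actTril (gcurve t) τ = fun i j k l =>
      dvec t l * ((dvec t i)⁻¹ * (dvec t j)⁻¹ * (dvec t k)⁻¹ * τ i j k l) := by
  funext i j k l
  rw [actTril, coe_gcurve ht, coe_gcurve_inv ht]
  have hsum : (∑ p, ∑ q, ∑ r,
      (Matrix.diagonal (fun i => (dvec t i)⁻¹) p i *
       Matrix.diagonal (fun i => (dvec t i)⁻¹) q j *
       Matrix.diagonal (fun i => (dvec t i)⁻¹) r k) • τ p q r)
      = ((dvec t i)⁻¹ * (dvec t j)⁻¹ * (dvec t k)⁻¹) • τ i j k := by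
    simp [Matrix.diagonal_apply, ite_mul, mul_ite, ite_smul]
  rw [hsum, Matrix.mulVec_diagonal]
  simp [mul_assoc]

lemma bil_key {t : ℂ} (ht : t ≠ 0) :
    actBil (gcurve t) μL19 = fun i j => t • μL19 i j := by
  rw [actBil_gcurve ht]
  funext i j k
  fin_cases i <;> fin_cases j <;> fin_cases k <;>
    simp [μL19, e4, dvec, Pi.single_apply] <;> field_simp <;> ring

set_option maxHeartbeats 2000000 in
lemma tril_key (α : ℂ) {t : ℂ} (ht : t ≠ 0) :
    actTril (gcurve t) (τL19 α) = τL16 α := by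
  rw [actTril_gcurve ht]
  funext i j k l
  fin_cases i <;> fin_cases j <;> fin_cases k <;> fin_cases l <;>
    simp [τL19, τL16, e4, dvec, Pi.single_apply] <;> field_simp <;> ring

/-- for every α, 𝓛₁₉^α degenerates to 𝓛₁₆^α. -/
theorem stmt4 : ∀ α : ℂ, Degenerates μL19 (τL19 α) zeroBil (τL16 α) := by
  intro α
  refine ⟨gcurve, ?_, ?_⟩
  · have hc : Tendsto (fun t : ℂ => (fun i j => t • μL19 i j : Bil4)) (𝓝 0) (𝓝 zeroBil) := by
      have hcont : Continuous fun t : ℂ => (fun i j => t • μL19 i j : Bil4) := by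
        apply continuous_pi; intro i; apply continuous_pi; intro j
        exact continuous_id.smul continuous_const
      have h0 := hcont.tendsto 0
      have : (fun i j => (0 : ℂ) • μL19 i j : Bil4) = zeroBil := by
        funext i j; simp [zeroBil]
      rwa [this] at h0
    refine (hc.mono_left nhdsWithin_le_nhds).congr' ?_
    filter_upwards [self_mem_nhdsWithin] with t ht
    exact (bil_key ht).symm
  · refine tendsto_const_nhds.congr' ?_
    filter_upwards [self_mem_nhdsWithin] with t ht
    exact (tril_key α ht).symm
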